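/- The function g(G₀) = Σ_{n=1}^{N} (−1)^{n+1}·C(N,n)·1/(1 + c·(n/G₀)^{2/α}) with constants c > 0, α > 2 and positive integer N is monotonically increasing in G₀ > 0, and monotonically decreasing in c. -/

import Mathlib

/-!
With `β = 2 / α ∈ (0, 1)` and `u = c / G₀ ^ β`, the bound is
`S(u) = Σ_{n=1}^N (-1)^{n+1} C(N,n) f(u^{1/β} n)` with `f x = (1 + x ^ β)⁻¹`, so it suffices that
`S` is antitone. The function `f` is completely monotone on `(0, ∞)`: Leibniz's rule applied to
`f · (1 + x ^ β) = 1` expresses `f⁽ᵏ⁾` through lower derivatives of `f` and derivatives of `x ^ β`,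
whose signs alternate because `0 ≤ β ≤ 1`. The derivative of
`t ↦ Σ_{n=1}^N (-1)^{n+1} C(N,n) f(t n)` is `N (-1)^{N-1} Δ_t^{N-1} f'(t)`, and iterated forward
differences of a completely monotone function alternate in sign, so this derivative is `≤ 0`.
-/

open Real Finset

open scoped fwdDiff

lemma antitoneOn_Ioi_of_hasDerivAt_nonpos {f f' : ℝ → ℝ} {a : ℝ}
    (hf : ∀ x, a < x → HasDerivAt f (f' x) x) (hf' : ∀ x, a < x → f' x ≤ 0) :
    AntitoneOn f (Set.Ioi a) := by
  refine antitoneOn_of_hasDerivWithinAt_nonpos (f' := f') (convex_Ioi a)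
    (fun x hx => (hf x hx).continuousAt.continuousWithinAt) ?_ ?_ <;> rw [interior_Ioi]
  · exact fun x hx => (hf x hx).hasDerivWithinAt
  · exact hf'

lemma neg_one_pow_mul_fwdDiff_iter (f : ℝ → ℝ) (n : ℕ) (x h : ℝ) :
    (-1) ^ n * (Δ_[h])^[n] f x = ∑ k ∈ range (n + 1), (-1) ^ k * n.choose k * f (x + k * h) := by
  rw [fwdDiff_iter_eq_sum_shift, mul_sum]
  refine sum_congr rfl fun k hk => ?_
  obtain ⟨j, rfl⟩ := Nat.exists_eq_add_of_le (Nat.lt_succ_iff.1 (mem_range.1 hk))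
  simp only [zsmul_eq_mul, nsmul_eq_mul, Nat.add_sub_cancel_left]
  have hsign : (-1 : ℝ) ^ (k + j) * (-1) ^ j = (-1) ^ k := by
    rw [pow_add, mul_assoc, ← pow_add, ← two_mul, pow_mul, neg_one_sq, one_pow, mul_one]
  push_cast
  rw [← hsign]
  ring

lemma sum_Icc_neg_one_pow_choose_mul_self (K : ℕ) (u : ℕ → ℝ) :
    ∑ n ∈ Icc 1 (K + 1), (-1) ^ (n + 1) * (K + 1).choose n * (u n * n)
      = (K + 1) * ∑ m ∈ range (K + 1), (-1) ^ m * K.choose m * u (m + 1) := by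
  rw [← Ico_add_one_right_eq_Icc, sum_Ico_eq_sum_range, mul_sum, Nat.add_sub_cancel]
  refine sum_congr rfl fun m _ => ?_
  have h : ((K + 1).choose (m + 1) : ℝ) * (m + 1) = (K + 1) * K.choose m := by
    exact_mod_cast (Nat.add_one_mul_choose_eq K m).symm
  rw [add_comm 1 m]
  push_cast
  linear_combination (-1) ^ m * u (m + 1) * h

/-- Complete monotonicity of `D 0` on `(0, ∞)`, with its derivatives `D k` carried along. -/
structure IsCompletelyMonotoneSeq (D : ℕ → ℝ → ℝ) : Prop where
  hasDerivAt : ∀ k {x}, 0 < x → HasDerivAt (D k) (D (k + 1) x) x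
  nonneg : ∀ k {x}, 0 < x → 0 ≤ (-1) ^ k * D k x

namespace IsCompletelyMonotoneSeq

variable {D : ℕ → ℝ → ℝ} (hD : IsCompletelyMonotoneSeq D)
include hD

lemma antitoneOn (k : ℕ) : AntitoneOn (fun x => (-1) ^ k * D k x) (Set.Ioi 0) :=
  antitoneOn_Ioi_of_hasDerivAt_nonpos (fun x hx => (hD.hasDerivAt k hx).const_mul _)
    fun x hx => by simpa [pow_succ] using hD.nonneg (k + 1) hx

lemma neg_deriv : IsCompletelyMonotoneSeq fun k => -D (k + 1) where
  hasDerivAt k _ hx := (hD.hasDerivAt (k + 1) hx).neg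
  nonneg k _ hx := by simpa [pow_succ] using hD.nonneg (k + 1) hx

lemma neg_fwdDiff {h : ℝ} (hh : 0 ≤ h) : IsCompletelyMonotoneSeq fun k => -Δ_[h] (D k) where
  hasDerivAt k x hx :=
    (((hD.hasDerivAt k (x := x + h) (by linarith)).comp_add_const x h).sub
      (hD.hasDerivAt k hx)).neg
  nonneg k x hx := by
    have := hD.antitoneOn k hx (show x + h ∈ Set.Ioi 0 from Set.mem_Ioi.2 (by linarith))
      (by linarith)
    simp only [fwdDiff, Pi.neg_apply]
    linarith

lemma fwdDiff_iter_nonneg (n : ℕ) {h x : ℝ} (hh : 0 ≤ h) (hx : 0 < x) :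
    0 ≤ (-1) ^ n * (Δ_[h])^[n] (D 0) x := by
  induction n generalizing D with
  | zero => simpa using hD.nonneg 0 hx
  | succ n ih =>
    have h_neg := ih (hD.neg_fwdDiff hh)
    rw [← neg_one_smul ℝ (Δ_[h] (D 0)), fwdDiff_iter_const_smul] at h_neg
    rw [Function.iterate_succ_apply, pow_succ]
    simpa [mul_assoc] using h_neg

lemma antitoneOn_sum_Icc_choose_mul (N : ℕ) :
    AntitoneOn (fun t => ∑ n ∈ Icc 1 N, (-1) ^ (n + 1) * N.choose n * D 0 (t * n))
      (Set.Ioi 0) := by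
  rcases N with _ | K
  · simpa using antitoneOn_const
  refine antitoneOn_Ioi_of_hasDerivAt_nonpos
    (f' := fun t => ∑ n ∈ Icc 1 (K + 1), (-1) ^ (n + 1) * (K + 1).choose n * (D 1 (t * n) * n))
    (fun t ht => HasDerivAt.fun_sum fun n hn => ?_) fun t ht => ?_
  · have htn : 0 < t * n := mul_pos ht (by exact_mod_cast (mem_Icc.1 hn).1)
    exact ((hD.hasDerivAt 0 htn).comp t (hasDerivAt_mul_const (n : ℝ))).const_mul _
  · have h_alt := hD.neg_deriv.fwdDiff_iter_nonneg K ht.le ht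
    simp only [neg_one_pow_mul_fwdDiff_iter, zero_add, Pi.neg_apply] at h_alt
    have h_sum : ∑ m ∈ range (K + 1), (-1) ^ m * K.choose m * D 1 (t * ↑(m + 1))
        = -∑ m ∈ range (K + 1), (-1) ^ m * K.choose m * -D 1 (t + m * t) := by
      rw [← sum_neg_distrib]
      refine sum_congr rfl fun m _ => ?_
      rw [show t + m * t = t * ↑(m + 1) by push_cast; ring]
      ring
    rw [sum_Icc_neg_one_pow_choose_mul_self K fun n => D 1 (t * n), h_sum]
    exact mul_nonpos_of_nonneg_of_nonpos (by positivity) (neg_nonpos.2 h_alt)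

end IsCompletelyMonotoneSeq

lemma ContDiffOn.hasDerivAt_iteratedDerivWithin {f : ℝ → ℝ} {s : Set ℝ} {k : ℕ}
    (hf : ContDiffOn ℝ (k + 1 : ℕ) f s) (hs : IsOpen s) {x : ℝ} (hx : x ∈ s) :
    HasDerivAt (iteratedDerivWithin k f s) (iteratedDerivWithin (k + 1) f s x) x := by
  have hd := hf.differentiableOn_iteratedDerivWithin (m := k) (mod_cast k.lt_succ_self)
    hs.uniqueDiffOn x hx
  rw [iteratedDerivWithin_succ, derivWithin_of_isOpen hs hx]
  exact (hd.differentiableAt (hs.mem_nhds hx)).hasDerivAt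

lemma iteratedDerivWithin_rpow_const_Ioi (β : ℝ) (k : ℕ) {x : ℝ} (hx : 0 < x) :
    iteratedDerivWithin k (fun x => x ^ β) (Set.Ioi 0) x
      = (descPochhammer ℝ k).eval β * x ^ (β - k) := by
  rw [iteratedDerivWithin_of_isOpen_eq_iterate isOpen_Ioi hx, iter_deriv_rpow_const]

lemma neg_one_pow_mul_descPochhammer_eval_nonneg {β : ℝ} (hβ0 : 0 ≤ β) (hβ1 : β ≤ 1) (m : ℕ) :
    0 ≤ (-1) ^ m * (descPochhammer ℝ (m + 1)).eval β := by
  induction m with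
  | zero => simpa using hβ0
  | succ m ih =>
    have hm : β ≤ m + 1 := by linarith [(Nat.cast_nonneg m : (0 : ℝ) ≤ m)]
    rw [descPochhammer_succ_right, Polynomial.eval_mul]
    simp only [Polynomial.eval_sub, Polynomial.eval_X, Polynomial.eval_natCast]
    push_cast
    calc (0 : ℝ) ≤ ((-1) ^ m * (descPochhammer ℝ (m + 1)).eval β) * (m + 1 - β) :=
          mul_nonneg ih (by linarith)
      _ = _ := by ring

lemma contDiffOn_one_add_rpow (β : ℝ) (n : ℕ) :
    ContDiffOn ℝ n (fun x : ℝ => 1 + x ^ β) (Set.Ioi 0) :=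
  contDiffOn_const.add fun _ hx => (contDiffAt_rpow_const_of_ne (ne_of_gt hx)).contDiffWithinAt

lemma contDiffOn_inv_one_add_rpow (β : ℝ) (n : ℕ) :
    ContDiffOn ℝ n (fun x : ℝ => (1 + x ^ β)⁻¹) (Set.Ioi 0) :=
  (contDiffOn_one_add_rpow β n).inv fun _ hx => (add_pos one_pos (rpow_pos_of_pos hx β)).ne'

section InvOneAddRpow

variable {β : ℝ}

lemma one_add_rpow_mul_iteratedDerivWithin_inv (k : ℕ) {x : ℝ} (hx : 0 < x) :
    (1 + x ^ β) * iteratedDerivWithin (k + 1) (fun x : ℝ => (1 + x ^ β)⁻¹) (Set.Ioi 0) x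
      = -∑ i ∈ range (k + 1), (k + 1).choose i *
          iteratedDerivWithin i (fun x : ℝ => (1 + x ^ β)⁻¹) (Set.Ioi 0) x *
            ((descPochhammer ℝ (k - i + 1)).eval β * x ^ (β - (k - i + 1 : ℕ))) := by
  have hx' : x ∈ Set.Ioi 0 := hx
  have h_one : iteratedDerivWithin (k + 1)
      ((fun x : ℝ => (1 + x ^ β)⁻¹) * fun x => 1 + x ^ β) (Set.Ioi 0) x = 0 := by
    rw [iteratedDerivWithin_congr (s := Set.Ioi 0) (g := fun _ => 1)
      (f := (fun x : ℝ => (1 + x ^ β)⁻¹) * fun x => 1 + x ^ β) (fun y (hy : 0 < y) =>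
      inv_mul_cancel₀ (add_pos one_pos (rpow_pos_of_pos hy β)).ne') hx', iteratedDerivWithin_const]
    simp
  rw [iteratedDerivWithin_mul hx' (uniqueDiffOn_Ioi 0)
    (contDiffOn_inv_one_add_rpow β (k + 1) x hx')
    (contDiffOn_one_add_rpow β (k + 1) x hx'), sum_range_succ] at h_one
  have h_terms : ∀ i ∈ range (k + 1),
      iteratedDerivWithin (k + 1 - i) (fun x : ℝ => 1 + x ^ β) (Set.Ioi 0) x
        = (descPochhammer ℝ (k - i + 1)).eval β * x ^ (β - (k - i + 1 : ℕ)) := fun i hi => by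
    rw [show k + 1 - i = k - i + 1 by have := mem_range.1 hi; omega,
      iteratedDerivWithin_const_add (Nat.succ_pos _), iteratedDerivWithin_rpow_const_Ioi β _ hx]
  simp only [Nat.choose_self, Nat.sub_self, iteratedDerivWithin_zero] at h_one
  rw [sum_congr rfl fun i hi => by rw [h_terms i hi]] at h_one
  linear_combination h_one

lemma neg_one_pow_mul_iteratedDerivWithin_inv_one_add_rpow_nonneg (hβ0 : 0 ≤ β) (hβ1 : β ≤ 1)
    (k : ℕ) {x : ℝ} (hx : 0 < x) :
    0 ≤ (-1) ^ k * iteratedDerivWithin k (fun x : ℝ => (1 + x ^ β)⁻¹) (Set.Ioi 0) x := by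
  have hψ : 0 < 1 + x ^ β := add_pos one_pos (rpow_pos_of_pos hx β)
  induction k using Nat.strong_induction_on with
  | _ k ih =>
  rcases k with _ | k
  · simpa using hψ.le
  refine (mul_nonneg_iff_of_pos_left hψ).1 ?_
  calc (0 : ℝ) ≤ ∑ i ∈ range (k + 1), (k + 1).choose i *
        ((-1) ^ i * iteratedDerivWithin i (fun x : ℝ => (1 + x ^ β)⁻¹) (Set.Ioi 0) x) *
          ((-1) ^ (k - i) * (descPochhammer ℝ (k - i + 1)).eval β * x ^ (β - (k - i + 1 : ℕ))) :=
        sum_nonneg fun i hi => mul_nonneg (mul_nonneg (Nat.cast_nonneg _)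
          (ih i (by have := mem_range.1 hi; omega))) (mul_nonneg
            (neg_one_pow_mul_descPochhammer_eval_nonneg hβ0 hβ1 _) (rpow_nonneg hx.le _))
    _ = _ := by
      rw [mul_left_comm, one_add_rpow_mul_iteratedDerivWithin_inv k hx, mul_neg, mul_sum,
        ← sum_neg_distrib]
      refine sum_congr rfl fun i hi => ?_
      obtain ⟨j, rfl⟩ := Nat.exists_eq_add_of_le (Nat.lt_succ_iff.1 (mem_range.1 hi))
      rw [Nat.add_sub_cancel_left]
      ring

end InvOneAddRpow

lemma isCompletelyMonotoneSeq_inv_one_add_rpow {β : ℝ} (hβ0 : 0 ≤ β) (hβ1 : β ≤ 1) :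
    IsCompletelyMonotoneSeq fun k =>
      iteratedDerivWithin k (fun x : ℝ => (1 + x ^ β)⁻¹) (Set.Ioi 0) where
  hasDerivAt k _ hx :=
    (contDiffOn_inv_one_add_rpow β (k + 1)).hasDerivAt_iteratedDerivWithin isOpen_Ioi hx
  nonneg k _ hx := neg_one_pow_mul_iteratedDerivWithin_inv_one_add_rpow_nonneg hβ0 hβ1 k hx

lemma antitoneOn_sum_Icc_inv_one_add_mul_rpow {β : ℝ} (hβ0 : 0 < β) (hβ1 : β ≤ 1) (N : ℕ) :
    AntitoneOn (fun u : ℝ => ∑ n ∈ Icc 1 N, (-1) ^ (n + 1) * N.choose n *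
      (1 / (1 + u * (n : ℝ) ^ β))) (Set.Ioi 0) := by
  have h_rescale : ∀ u : ℝ, 0 < u → ∀ n : ℕ,
      1 / (1 + u * (n : ℝ) ^ β) = iteratedDerivWithin 0 (fun x : ℝ => (1 + x ^ β)⁻¹) (Set.Ioi 0)
        (u ^ β⁻¹ * n) := fun u hu n => by
    rw [iteratedDerivWithin_zero, one_div, mul_rpow (rpow_nonneg hu.le _) (Nat.cast_nonneg n),
      rpow_inv_rpow hu.le hβ0.ne']
  intro u hu v hv huv
  simp only [h_rescale u hu, h_rescale v hv]
  exact (isCompletelyMonotoneSeq_inv_one_add_rpow hβ0.le hβ1).antitoneOn_sum_Icc_choose_mul N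
    (rpow_pos_of_pos hu _) (rpow_pos_of_pos hv _) (rpow_le_rpow hu.le huv (inv_nonneg.2 hβ0.le))

theorem coverage_bound_monotone_general (N : ℕ) (α : ℝ) (hα : 2 < α) :
    (∀ c : ℝ, 0 < c →
      MonotoneOn (fun G₀ : ℝ =>
        ∑ n ∈ Icc 1 N, (-1 : ℝ) ^ (n + 1) * (N.choose n) *
          (1 / (1 + c * ((n : ℝ) / G₀) ^ (2 / α)))) (Set.Ioi (0 : ℝ))) ∧
    (∀ G₀ : ℝ, 0 < G₀ →
      AntitoneOn (fun c : ℝ =>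
        ∑ n ∈ Icc 1 N, (-1 : ℝ) ^ (n + 1) * (N.choose n) *
          (1 / (1 + c * ((n : ℝ) / G₀) ^ (2 / α)))) (Set.Ioi (0 : ℝ))) := by
  have hβ0 : 0 < 2 / α := div_pos two_pos (by linarith)
  have hβ1 : 2 / α ≤ 1 := (div_le_one (by linarith)).2 hα.le
  have hS := antitoneOn_sum_Icc_inv_one_add_mul_rpow hβ0 hβ1 N
  have h_split : ∀ c G : ℝ, 0 < G → ∀ n : ℕ,
      c * ((n : ℝ) / G) ^ (2 / α) = c / G ^ (2 / α) * (n : ℝ) ^ (2 / α) := fun c G hG n => by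
    rw [div_rpow (Nat.cast_nonneg n) hG.le]
    ring
  refine ⟨fun c hc G₁ hG₁ G₂ hG₂ hG => ?_, fun G hG c₁ hc₁ c₂ hc₂ hc => ?_⟩
  · simp only [h_split c _ hG₁, h_split c _ hG₂]
    exact hS (div_pos hc (rpow_pos_of_pos hG₂ _)) (div_pos hc (rpow_pos_of_pos hG₁ _))
      (div_le_div_of_nonneg_left hc.le (rpow_pos_of_pos hG₁ _) (rpow_le_rpow hG₁.le hG hβ0.le))
  · simp only [h_split _ G hG]
    exact hS (div_pos hc₁ (rpow_pos_of_pos hG _)) (div_pos hc₂ (rpow_pos_of_pos hG _))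
      (div_le_div_of_nonneg_right hc (rpow_pos_of_pos hG _).le)

/-- The closed-form coverage lower bound
`g(G₀) = Σ_{n=1}^N (-1)^{n+1} C(N,n) / (1 + c (n/G₀)^{2/α})`
is monotonically increasing in the directivity gain `G₀ > 0` and monotonically
decreasing in the constant `c > 0`. -/
theorem coverage_bound_monotone (N : ℕ) (hN : 0 < N) (α : ℝ) (hα : 2 < α) :
    (∀ c : ℝ, 0 < c →
      MonotoneOn (fun G₀ : ℝ =>
        ∑ n ∈ Icc 1 N, (-1 : ℝ) ^ (n + 1) * (N.choose n) *
          (1 / (1 + c * ((n : ℝ) / G₀) ^ (2 / α)))) (Set.Ioi (0 : ℝ))) ∧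
    (∀ G₀ : ℝ, 0 < G₀ →
      AntitoneOn (fun c : ℝ =>
        ∑ n ∈ Icc 1 N, (-1 : ℝ) ^ (n + 1) * (N.choose n) *
          (1 / (1 + c * ((n : ℝ) / G₀) ^ (2 / α)))) (Set.Ioi (0 : ℝ))) :=
  coverage_bound_monotone_general N α hα
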